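/- arXiv:1011.6071 — 2 statements merged into one kernel-verified Lean document; each statement's English description precedes it below -/
import Mathlib

section
/- With φ the sawtooth function and t_m the step function as above, for every x ∈ ℝ one has |φ(2^{2νm}(x + t_m(x))) - φ(2^{2νm} x)| = |2^{2νm} t_m(x)| = 1/2, since φ is affine with slope ±1 on each interval between consecutive integers and no integer lies between 2^{2νm}x and 2^{2νm}(x + t_m(x)). -/
/-!
Write `y = 2^{2νm} x`. Then `2^{2νm} t_m(x) = ±1/2`, and the sign is chosen so that `y` and
`y ± 1/2` lie in a common interval `[n, n + 1]` with `n ∈ ℤ`. On such an interval `φ(z) = |z - 2k|`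
for the even integer `2k ∈ {n, n + 1}`, and `z - 2k` keeps a constant sign there, so `φ` is affine
with slope `±1` and the increment of `φ` has absolute value `1/2`.
-/

/-- The sawtooth function: φ(x) = |x| on [-1,1], extended 2-periodically. -/
noncomputable def phi (x : ℝ) : ℝ := |x - 2 * round (x / 2)|

/-- The step function t_m: +2^{-2νm-1} if fract(2^{2νm}x) ∈ (0,1/2], else -2^{-2νm-1}. -/
noncomputable def tstep (ν m : ℕ) (x : ℝ) : ℝ :=
  if Int.fract ((2 : ℝ) ^ (2 * ν * m) * x) ∈ Set.Ioc (0 : ℝ) (1 / 2)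
  then (2 : ℝ) ^ (-(2 * (ν : ℤ) * (m : ℤ) + 1))
  else -(2 : ℝ) ^ (-(2 * (ν : ℤ) * (m : ℤ) + 1))

open Set

lemma phi_eq_abs_sub_two_mul {y : ℝ} (k : ℤ) (hk : |y - 2 * k| ≤ 1) : phi y = |y - 2 * k| := by
  have hhalf : |y / 2 - k| ≤ 1 / 2 := by
    rw [show y / 2 - k = (y - 2 * k) / 2 by ring, abs_div, abs_two]; linarith
  have hround : |y / 2 - round (y / 2)| = |y / 2 - k| := by
    refine le_antisymm (round_le _ k) ?_
    by_cases hr : round (y / 2) = k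
    · rw [hr]
    have hgap : (1 : ℝ) ≤ |(round (y / 2) : ℝ) - k| := by
      exact_mod_cast Int.one_le_abs (sub_ne_zero.mpr hr)
    have htri := abs_sub_le (round (y / 2) : ℝ) (y / 2) k
    rw [abs_sub_comm _ (y / 2)] at htri
    linarith
  calc phi y = 2 * |y / 2 - round (y / 2)| := by
        rw [phi, ← abs_two, ← abs_mul, abs_two]; ring_nf
    _ = |y - 2 * k| := by
        rw [hround, ← abs_two, ← abs_mul, abs_two]; ring_nf

lemma abs_abs_sub_abs_eq_of_same_sign {a b : ℝ} (h : (0 ≤ a ∧ 0 ≤ b) ∨ (a ≤ 0 ∧ b ≤ 0)) :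
    |(|b| - |a|)| = |b - a| := by
  rcases h with ⟨ha, hb⟩ | ⟨ha, hb⟩
  · rw [abs_of_nonneg ha, abs_of_nonneg hb]
  · rw [abs_of_nonpos ha, abs_of_nonpos hb, ← abs_neg]; ring_nf

lemma abs_phi_sub_phi_of_mem_Icc {a b : ℝ} (n : ℤ) (ha : a ∈ Icc (n : ℝ) (n + 1))
    (hb : b ∈ Icc (n : ℝ) (n + 1)) : |phi b - phi a| = |b - a| := by
  obtain ⟨ha₁, ha₂⟩ := ha
  obtain ⟨hb₁, hb₂⟩ := hb
  obtain ⟨k, hn | hn⟩ := Int.even_or_odd' n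
  · have hn' : (n : ℝ) = 2 * k := by exact_mod_cast hn
    rw [phi_eq_abs_sub_two_mul k (abs_le.mpr ⟨by linarith, by linarith⟩),
      phi_eq_abs_sub_two_mul k (abs_le.mpr ⟨by linarith, by linarith⟩),
      abs_abs_sub_abs_eq_of_same_sign (Or.inl ⟨by linarith, by linarith⟩)]
    ring_nf
  · have hn' : (n : ℝ) = 2 * k + 1 := by exact_mod_cast hn
    have hk : ((k + 1 : ℤ) : ℝ) = k + 1 := by push_cast; ring
    rw [phi_eq_abs_sub_two_mul (k + 1) (abs_le.mpr ⟨by linarith, by linarith⟩),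
      phi_eq_abs_sub_two_mul (k + 1) (abs_le.mpr ⟨by linarith, by linarith⟩),
      abs_abs_sub_abs_eq_of_same_sign (Or.inr ⟨by linarith, by linarith⟩)]
    ring_nf

lemma exists_int_mem_Icc_add_half_step (y : ℝ) :
    ∃ n : ℤ, y ∈ Icc (n : ℝ) (n + 1) ∧
      y + (if Int.fract y ∈ Ioc (0 : ℝ) (1 / 2) then 1 / 2 else -(1 / 2)) ∈ Icc (n : ℝ) (n + 1) := by
  have hy : y = ⌊y⌋ + Int.fract y := (Int.floor_add_fract y).symm
  have h₀ := Int.fract_nonneg y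
  have h₁ := Int.fract_lt_one y
  split_ifs with h
  · obtain ⟨hpos, hle⟩ := h
    exact ⟨⌊y⌋, ⟨by linarith, by linarith⟩, ⟨by linarith, by linarith⟩⟩
  · rcases le_or_gt (Int.fract y) (1 / 2) with hle | hgt
    · have hzero : Int.fract y = 0 := by
        by_contra hne
        exact h ⟨lt_of_le_of_ne h₀ (Ne.symm hne), hle⟩
      refine ⟨⌊y⌋ - 1, ⟨?_, ?_⟩, ⟨?_, ?_⟩⟩ <;> push_cast <;> linarith
    · exact ⟨⌊y⌋, ⟨by linarith, by linarith⟩, ⟨by linarith, by linarith⟩⟩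

lemma two_pow_mul_tstep (ν m : ℕ) (x : ℝ) :
    (2 : ℝ) ^ (2 * ν * m) * tstep ν m x =
      if Int.fract ((2 : ℝ) ^ (2 * ν * m) * x) ∈ Ioc (0 : ℝ) (1 / 2) then 1 / 2 else -(1 / 2) := by
  have hhalf : (2 : ℝ) ^ (2 * ν * m) * (2 : ℝ) ^ (-(2 * (ν : ℤ) * (m : ℤ) + 1)) = 1 / 2 := by
    rw [← zpow_natCast, ← zpow_add₀ two_ne_zero]
    norm_num
  unfold tstep
  split_ifs
  · exact hhalf
  · rw [mul_neg, hhalf]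

theorem phi_middle_term_general (ν m : ℕ) (x : ℝ) :
    |phi ((2 : ℝ) ^ (2 * ν * m) * (x + tstep ν m x)) - phi ((2 : ℝ) ^ (2 * ν * m) * x)|
      = |(2 : ℝ) ^ (2 * ν * m) * tstep ν m x|
    ∧ |(2 : ℝ) ^ (2 * ν * m) * tstep ν m x| = 1 / 2 := by
  rw [mul_add, two_pow_mul_tstep]
  obtain ⟨n, hy, hys⟩ := exists_int_mem_Icc_add_half_step ((2 : ℝ) ^ (2 * ν * m) * x)
  refine ⟨?_, by split_ifs <;> norm_num⟩
  rw [abs_phi_sub_phi_of_mem_Icc n hy hys, add_sub_cancel_left]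

theorem phi_middle_term (ν m : ℕ) (hν : 1 ≤ ν) (x : ℝ) :
    |phi ((2 : ℝ) ^ (2 * ν * m) * (x + tstep ν m x)) - phi ((2 : ℝ) ^ (2 * ν * m) * x)|
      = |(2 : ℝ) ^ (2 * ν * m) * tstep ν m x|
    ∧ |(2 : ℝ) ^ (2 * ν * m) * tstep ν m x| = 1 / 2 :=
  phi_middle_term_general ν m x
end

section
/- Let α ∈ (0,1), β ∈ (α,1], and ν ∈ ℕ with 2ν > 1/(1-α). Then for every x ∈ ℝ, limsup_{t→0} |K_{α,ν}(x+t) - K_{α,ν}(x)| / |t|^β = +∞. In particular, K_{α,ν} is at no point Hölder continuous of any exponent β > α. -/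
/-- The Knopp-type function K_{α,ν}. -/
noncomputable def Kfun (α : ℝ) (ν : ℕ) (x : ℝ) : ℝ :=
  ∑' k : ℕ, (2 : ℝ) ^ (-(2 * α * (ν : ℝ) * (k : ℝ))) * phi ((2 : ℝ) ^ (2 * ν * k) * x)

open Finset

lemma phi_nonneg (x : ℝ) : 0 ≤ phi x := abs_nonneg _

lemma phi_eq_two_mul_abs (x : ℝ) : phi x = 2 * |x / 2 - round (x / 2)| := by
  rw [phi, ← abs_two, ← abs_mul, abs_two]
  ring_nf

lemma phi_le_one (x : ℝ) : phi x ≤ 1 := by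
  rw [phi_eq_two_mul_abs]
  linarith [abs_sub_round (x / 2)]

lemma phi_le_abs_sub_two_mul (x : ℝ) (m : ℤ) : phi x ≤ |x - 2 * m| := by
  have h : |x - 2 * m| = 2 * |x / 2 - m| := by
    rw [← abs_two, ← abs_mul, abs_two]
    ring_nf
  rw [phi_eq_two_mul_abs, h]
  linarith [round_le (x / 2) m]

lemma lipschitzWith_phi : LipschitzWith 1 phi :=
  LipschitzWith.of_le_add fun y x => by
    calc phi y ≤ |y - 2 * round (x / 2)| := phi_le_abs_sub_two_mul y _
      _ ≤ |x - 2 * round (x / 2)| + |y - x| := by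
        simpa [add_comm] using abs_sub_le y x (2 * (round (x / 2) : ℝ))
      _ = phi x + dist y x := by rw [Real.dist_eq]; rfl

lemma phi_add_two_mul_int (x : ℝ) (m : ℤ) : phi (x + 2 * m) = phi x := by
  rw [phi, show (x + 2 * m) / 2 = x / 2 + m by ring, round_add_intCast, phi]
  push_cast
  ring_nf

lemma phi_eq_abs_sub_two_mul_s13 {x : ℝ} {j : ℤ} (h : |x - 2 * j| ≤ 1) : phi x = |x - 2 * j| := by
  refine le_antisymm (phi_le_abs_sub_two_mul x j) ?_
  obtain hr | hr := eq_or_ne (round (x / 2)) j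
  · rw [phi, hr]
  · have h1 : (1 : ℝ) ≤ |(round (x / 2) : ℝ) - j| := by
      exact_mod_cast Int.one_le_abs (sub_ne_zero.mpr hr)
    have h2 := abs_sub (x - 2 * j) (x - 2 * round (x / 2))
    rw [show x - 2 * j - (x - 2 * round (x / 2)) = 2 * ((round (x / 2) : ℝ) - j) by ring,
      abs_mul, abs_two] at h2
    rw [phi]
    linarith

lemma abs_phi_sub_phi_of_mem_Icc_s13 {m : ℤ} {u v : ℝ} (hu : u ∈ Set.Icc (m : ℝ) (m + 1))
    (hv : v ∈ Set.Icc (m : ℝ) (m + 1)) : |phi v - phi u| = |v - u| := by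
  obtain ⟨j, rfl | rfl⟩ := Int.even_or_odd' m
  · push_cast at hu hv
    have hu' : phi u = u - 2 * j := by
      rw [phi_eq_abs_sub_two_mul_s13 (j := j)] <;> rw [abs_of_nonneg] <;> linarith [hu.1, hu.2]
    have hv' : phi v = v - 2 * j := by
      rw [phi_eq_abs_sub_two_mul_s13 (j := j)] <;> rw [abs_of_nonneg] <;> linarith [hv.1, hv.2]
    rw [hu', hv']
    ring_nf
  · push_cast at hu hv
    have hu' : phi u = 2 * (j + 1) - u := by
      rw [phi_eq_abs_sub_two_mul_s13 (j := j + 1)] <;> push_cast <;> rw [abs_of_nonpos] <;>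
        linarith [hu.1, hu.2]
    have hv' : phi v = 2 * (j + 1) - v := by
      rw [phi_eq_abs_sub_two_mul_s13 (j := j + 1)] <;> push_cast <;> rw [abs_of_nonpos] <;>
        linarith [hv.1, hv.2]
    rw [hu', hv', ← abs_neg]
    ring_nf

lemma exists_abs_phi_add_half_sub_phi (u : ℝ) :
    ∃ s : ℤ, |s| = 1 ∧ |phi (u + s / 2) - phi u| = 1 / 2 := by
  have h1 := Int.floor_le u
  have h2 := Int.lt_floor_add_one u
  obtain ⟨s, hs, hmem⟩ : ∃ s : ℤ, |s| = 1 ∧ u + s / 2 ∈ Set.Icc (⌊u⌋ : ℝ) (⌊u⌋ + 1) := by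
    by_cases hu : u ≤ ⌊u⌋ + 1 / 2
    · exact ⟨1, rfl, by push_cast; constructor <;> linarith⟩
    · exact ⟨-1, rfl, by push_cast; constructor <;> linarith⟩
  refine ⟨s, hs, ?_⟩
  rw [abs_phi_sub_phi_of_mem_Icc_s13 ⟨h1, h2.le⟩ hmem, add_sub_cancel_left, abs_div, ← Int.cast_abs,
    hs]
  norm_num

noncomputable def sawtoothSeries (a : ℝ) (b : ℕ) (x : ℝ) : ℝ :=
  ∑' k : ℕ, a ^ k * phi (b ^ k * x)

lemma summable_sawtoothSeries {a : ℝ} (ha₀ : 0 ≤ a) (ha₁ : a < 1) (b : ℕ) (x : ℝ) :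
    Summable fun k : ℕ => a ^ k * phi (b ^ k * x) :=
  (summable_geometric_of_lt_one ha₀ ha₁).of_nonneg_of_le
    (fun k => mul_nonneg (pow_nonneg ha₀ k) (phi_nonneg _))
    (fun k => mul_le_of_le_one_right (pow_nonneg ha₀ k) (phi_le_one _))

lemma phi_pow_mul_add_eq {b n k : ℕ} (hb : 4 ∣ b) (hnk : n < k) (x : ℝ) (s : ℤ) :
    phi (b ^ k * (x + s / (2 * b ^ n))) = phi (b ^ k * x) := by
  obtain ⟨c, rfl⟩ := hb
  obtain rfl | hc := eq_or_ne c 0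
  · simp [zero_pow (by omega : k ≠ 0)]
  obtain ⟨j, rfl⟩ := Nat.exists_eq_add_of_lt hnk
  have h : ((4 * c : ℕ) : ℝ) ^ (n + j + 1) * (s / (2 * ((4 * c : ℕ) : ℝ) ^ n))
      = 2 * ((s * c * (4 * c) ^ j : ℤ) : ℝ) := by
    have : ((4 * c : ℕ) : ℝ) ≠ 0 := by positivity
    push_cast
    field_simp
    ring
  rw [mul_add, h, phi_add_two_mul_int]

lemma sawtoothSeries_add_sub_eq_sum {a : ℝ} (ha₀ : 0 ≤ a) (ha₁ : a < 1) {b : ℕ} (hb : 4 ∣ b)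
    (x : ℝ) (n : ℕ) (s : ℤ) :
    sawtoothSeries a b (x + s / (2 * b ^ n)) - sawtoothSeries a b x =
      ∑ k ∈ range (n + 1), a ^ k * (phi (b ^ k * (x + s / (2 * b ^ n))) - phi (b ^ k * x)) := by
  rw [sawtoothSeries, sawtoothSeries, ← (summable_sawtoothSeries ha₀ ha₁ b _).tsum_sub
    (summable_sawtoothSeries ha₀ ha₁ b x)]
  simp_rw [← mul_sub]
  apply tsum_eq_sum
  intro k hk
  rw [phi_pow_mul_add_eq hb (by simpa using hk), sub_self, mul_zero]

lemma abs_sum_sawtooth_increment_le {a : ℝ} (ha₀ : 0 ≤ a) (b : ℕ) (x t : ℝ) (n : ℕ) :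
    |∑ k ∈ range n, a ^ k * (phi (b ^ k * (x + t)) - phi (b ^ k * x))|
      ≤ (∑ k ∈ range n, (a * b) ^ k) * |t| := by
  rw [sum_mul]
  refine (abs_sum_le_sum_abs _ _).trans (sum_le_sum fun k _ => ?_)
  have hlip : |phi (b ^ k * (x + t)) - phi (b ^ k * x)| ≤ b ^ k * |t| := by
    have h := lipschitzWith_phi.dist_le_mul (b ^ k * (x + t)) (b ^ k * x)
    rwa [NNReal.coe_one, one_mul, Real.dist_eq, Real.dist_eq, ← mul_sub, add_sub_cancel_left,
      abs_mul, abs_pow, Nat.abs_cast] at h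
  rw [abs_mul, abs_of_nonneg (pow_nonneg ha₀ k), mul_pow, mul_assoc]
  exact mul_le_mul_of_nonneg_left hlip (pow_nonneg ha₀ k)

lemma geom_sum_le_pow_div_sub_one {A : ℝ} (hA : 1 < A) (n : ℕ) :
    ∑ k ∈ range n, A ^ k ≤ A ^ n / (A - 1) := by
  rw [geom_sum_eq hA.ne']
  gcongr
  linarith

lemma exists_le_abs_sawtoothSeries_add_sub {a : ℝ} (ha₀ : 0 ≤ a) (ha₁ : a < 1) {b : ℕ}
    (hb : 4 ∣ b) (hab : 2 < a * b) (x : ℝ) (n : ℕ) :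
    ∃ t : ℝ, |t| = 1 / (2 * b ^ n) ∧ a ^ n * (a * b - 2) / (2 * (a * b - 1)) ≤
      |sawtoothSeries a b (x + t) - sawtoothSeries a b x| := by
  have hb₀ : (0 : ℝ) < b ^ n := pow_pos (Nat.cast_pos.2 (Nat.pos_of_ne_zero (by
    rintro rfl; simp at hab; linarith))) n
  obtain ⟨s, hs, hjump⟩ := exists_abs_phi_add_half_sub_phi (b ^ n * x)
  have ht : |(s : ℝ) / (2 * b ^ n)| = 1 / (2 * b ^ n) := by
    rw [abs_div, ← Int.cast_abs, hs, abs_of_pos (by positivity), Int.cast_one]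
  refine ⟨s / (2 * b ^ n), ht, ?_⟩
  have hlast : |a ^ n * (phi (b ^ n * (x + s / (2 * b ^ n))) - phi (b ^ n * x))| = a ^ n / 2 := by
    rw [abs_mul, abs_of_nonneg (pow_nonneg ha₀ n), show (b : ℝ) ^ n * (x + s / (2 * b ^ n))
      = b ^ n * x + s / 2 by field_simp, hjump, mul_one_div]
  have hhead := (abs_sum_sawtooth_increment_le ha₀ b x (s / (2 * b ^ n)) n).trans
    (mul_le_mul_of_nonneg_right (geom_sum_le_pow_div_sub_one (by linarith) n) (abs_nonneg _))
  rw [ht, mul_pow, show a ^ n * (b : ℝ) ^ n / (a * b - 1) * (1 / (2 * b ^ n))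
    = a ^ n / (2 * (a * b - 1)) by field_simp] at hhead
  rw [sawtoothSeries_add_sub_eq_sum ha₀ ha₁ hb, sum_range_succ]
  set head := ∑ k ∈ range n, a ^ k * (phi (b ^ k * (x + s / (2 * b ^ n))) - phi (b ^ k * x))
  set last := a ^ n * (phi (b ^ n * (x + s / (2 * b ^ n))) - phi (b ^ n * x))
  have htri : |last| ≤ |head + last| + |head| := by simpa using abs_sub (head + last) head
  have hsplit :
      a ^ n * (a * b - 2) / (2 * (a * b - 1)) = a ^ n / 2 - a ^ n / (2 * (a * b - 1)) := by
    field_simp [show a * b - 1 ≠ 0 by linarith]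
    ring
  linarith

lemma sawtoothSeries_holder_quotient_unbounded {a β : ℝ} (ha₀ : 0 ≤ a) (ha₁ : a < 1) {b : ℕ}
    (hb : 4 ∣ b) (hab : 2 < a * b) (hβ : 0 ≤ β) (habβ : 1 < a * b ^ β) (x C r : ℝ) (hr : 0 < r) :
    ∃ t : ℝ, t ≠ 0 ∧ |t| < r ∧
      C < |sawtoothSeries a b (x + t) - sawtoothSeries a b x| / |t| ^ β := by
  set c := (a * b - 2) / (2 * (a * b - 1)) with hc_def
  have hc : 0 < c := div_pos (by linarith) (by linarith)
  have hb₁ : (1 : ℝ) < b := by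
    obtain ⟨d, rfl⟩ := hb
    rcases Nat.eq_zero_or_pos d with rfl | hd
    · simp at hab; linarith
    · exact_mod_cast (by omega : 1 < 4 * d)
  obtain ⟨n, hCn, hrn⟩ :=
    (((tendsto_pow_atTop_atTop_of_one_lt habβ).eventually_gt_atTop (C / c)).and
      ((tendsto_pow_atTop_atTop_of_one_lt hb₁).eventually_gt_atTop (1 / (2 * r)))).exists
  obtain ⟨t, ht, hosc⟩ := exists_le_abs_sawtoothSeries_add_sub ha₀ ha₁ hb hab x n
  have hbn : (0 : ℝ) < b ^ n := by positivity
  have ht₀ : 0 < |t| := by rw [ht]; positivity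
  refine ⟨t, abs_pos.1 ht₀, ?_, ?_⟩
  · rw [ht, div_lt_iff₀ (by positivity)]
    rw [div_lt_iff₀ (by positivity)] at hrn
    linarith
  have hCc : C < c * (a * b ^ β) ^ n := by rwa [div_lt_iff₀' hc] at hCn
  have htβ : |t| ^ β * (2 * b ^ n) ^ β = 1 := by
    rw [← Real.mul_rpow (abs_nonneg t) (by positivity), ht, one_div_mul_cancel (by positivity),
      Real.one_rpow]
  rw [lt_div_iff₀ (Real.rpow_pos_of_pos ht₀ β)]
  calc C * |t| ^ β < c * (a * b ^ β) ^ n * |t| ^ β := by gcongr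
    _ = a ^ n * c * ((b ^ n : ℝ) ^ β * |t| ^ β) := by
      rw [mul_pow, Real.rpow_pow_comm (Nat.cast_nonneg b)]
      ring
    _ ≤ a ^ n * c * ((2 * b ^ n) ^ β * |t| ^ β) := by gcongr; linarith
    _ = a ^ n * (a * b - 2) / (2 * (a * b - 1)) := by rw [mul_comm _ (|t| ^ β), htβ, hc_def]; ring
    _ ≤ _ := hosc

lemma not_exists_holder_bound_of_unbounded_quotient {f : ℝ → ℝ} {x β : ℝ}
    (h : ∀ C r : ℝ, 0 < r → ∃ t : ℝ, t ≠ 0 ∧ |t| < r ∧ C < |f (x + t) - f x| / |t| ^ β) :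
    ¬ ∃ r > (0 : ℝ), ∃ C > (0 : ℝ), ∀ y ∈ Set.Icc (x - r) (x + r),
      |f y - f x| ≤ C * |y - x| ^ β := by
  rintro ⟨r, hr, C, -, hC⟩
  obtain ⟨t, ht, htr, hlt⟩ := h C r hr
  have hy := hC (x + t) ⟨by linarith [neg_abs_le t], by linarith [le_abs_self t]⟩
  rw [add_sub_cancel_left] at hy
  rw [lt_div_iff₀ (Real.rpow_pos_of_pos (abs_pos.2 ht) β)] at hlt
  linarith

lemma Kfun_eq_sawtoothSeries (α : ℝ) (ν : ℕ) :
    Kfun α ν = sawtoothSeries ((2 : ℝ) ^ (-(2 * α * ν))) (4 ^ ν) := by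
  funext x
  refine tsum_congr fun k => ?_
  rw [← Real.rpow_natCast _ k, ← Real.rpow_mul zero_le_two]
  congr 1
  · ring_nf
  · push_cast
    rw [pow_mul, pow_mul]
    norm_num

lemma two_rpow_neg_mul_four_pow_rpow (α γ : ℝ) (ν : ℕ) :
    (2 : ℝ) ^ (-(2 * α * ν)) * ((4 ^ ν : ℕ) : ℝ) ^ γ = 2 ^ (2 * ν * (γ - α)) := by
  rw [show ((4 ^ ν : ℕ) : ℝ) = 2 ^ (2 * ν : ℝ) by
      rw [Real.rpow_mul zero_le_two]; push_cast; norm_num,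
    ← Real.rpow_mul zero_le_two, ← Real.rpow_add two_pos]
  ring_nf

theorem Kfun_nowhere_improvable (α β : ℝ) (ν : ℕ)
    (hα : α ∈ Set.Ioo (0 : ℝ) 1) (hβ : β ∈ Set.Ioc α 1) (hν : 1 / (1 - α) < 2 * (ν : ℝ))
    (x : ℝ) :
    (∀ C > (0 : ℝ), ∀ r > (0 : ℝ), ∃ t : ℝ, t ≠ 0 ∧ |t| < r ∧
      C < |Kfun α ν (x + t) - Kfun α ν x| / |t| ^ β)
    ∧ ¬ ∃ r > (0 : ℝ), ∃ C > (0 : ℝ), ∀ y ∈ Set.Icc (x - r) (x + r),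
        |Kfun α ν y - Kfun α ν x| ≤ C * |y - x| ^ β := by
  obtain ⟨hα₀, hα₁⟩ := hα
  have hν₁ : 1 < 2 * ν * (1 - α) := by rwa [div_lt_iff₀ (by linarith)] at hν
  have hν₀ : 0 < (ν : ℝ) := by
    by_contra! h
    nlinarith
  have hscale := two_rpow_neg_mul_four_pow_rpow α
  have ha₁ : (2 : ℝ) ^ (-(2 * α * ν)) < 1 :=
    Real.rpow_lt_one_of_one_lt_of_neg one_lt_two (by nlinarith)
  have hab : 2 < (2 : ℝ) ^ (-(2 * α * ν)) * ((4 ^ ν : ℕ) : ℝ) := by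
    have h := hscale 1 ν
    rw [Real.rpow_one] at h
    rw [h]
    simpa using Real.rpow_lt_rpow_of_exponent_lt one_lt_two hν₁
  have habβ : 1 < (2 : ℝ) ^ (-(2 * α * ν)) * ((4 ^ ν : ℕ) : ℝ) ^ β := by
    rw [hscale]
    exact Real.one_lt_rpow one_lt_two (by nlinarith [hβ.1])
  have hquot := sawtoothSeries_holder_quotient_unbounded (Real.rpow_nonneg zero_le_two _) ha₁
    (dvd_pow_self 4 (by exact_mod_cast hν₀.ne')) hab (by linarith [hβ.1]) habβ x
  rw [Kfun_eq_sawtoothSeries]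
  exact ⟨fun C _ r hr => hquot C r hr, not_exists_holder_bound_of_unbounded_quotient hquot⟩
end
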